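/- Let 0 < γ < η ≤ 1 and f(x) = |x − γ| on ℝ. Run projected gradient descent on [−1,1] with step size η started at x_0 = 0 for T iterations (f is differentiable at every visited point, so the updates are uniquely determined). Then the iterates alternate: x_t = 0 for every even t and x_t = η for every odd t with t ≤ T. Consequently the averaged output satisfies x^GD = (1/T) Σ_{t=1}^T x_t = η·⌈T/2⌉/T ≥ η/2, and f(x^GD) − min_{x∈[−1,1]} f(x) ≥ η/2 − γ. -/

import Mathlib

/-! Since `0 < γ < η ≤ 1`, a step from `0` moves up by `η` without being projected, and a step
from `η > γ` moves back down to `0`; so the iterates alternate between `0` and `η`.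
Hence the first `T` iterates sum to `⌈T/2⌉ η`, and since `γ ∈ [-1, 1]` the minimum of `f`
is `0`. -/

open scoped BigOperators

/-- Projected gradient descent on `[−1,1]` with step size `η` for `f(x) = |x − γ|`, started
at `0`; at each visited point `f` is differentiable with `f'(x) = −1` for `x < γ` and
`f'(x) = 1` for `x > γ`, so the iterates are uniquely determined. -/
noncomputable def absSeq (γ η : ℝ) : ℕ → ℝ
  | 0 => 0
  | t + 1 =>
      max (-1) (min 1 (absSeq γ η t - η * (if absSeq γ η t < γ then (-1 : ℝ) else 1)))

open Finset

theorem absSeq_succ_of_eq_zero {γ η : ℝ} {t : ℕ} (hγ : 0 < γ) (hη₀ : 0 ≤ η) (hη : η ≤ 1)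
    (ht : absSeq γ η t = 0) : absSeq γ η (t + 1) = η := by
  rw [absSeq, ht, if_pos hγ, zero_sub, mul_neg_one, neg_neg, min_eq_right hη,
    max_eq_right (by linarith)]

theorem absSeq_succ_of_eq_self {γ η : ℝ} {t : ℕ} (hγη : γ ≤ η) (ht : absSeq γ η t = η) :
    absSeq γ η (t + 1) = 0 := by
  rw [absSeq, ht, if_neg hγη.not_gt, mul_one, sub_self, min_eq_right zero_le_one,
    max_eq_right (by norm_num)]

theorem absSeq_eq {γ η : ℝ} (hγ : 0 < γ) (hγη : γ < η) (hη : η ≤ 1) (t : ℕ) :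
    absSeq γ η t = if t % 2 = 0 then 0 else η := by
  induction t with
  | zero => rfl
  | succ t ih =>
    rcases Nat.mod_two_eq_zero_or_one t with h | h
    · rw [if_pos h] at ih
      rw [absSeq_succ_of_eq_zero hγ (hγ.trans hγη).le hη ih, if_neg (by omega)]
    · rw [if_neg (by omega)] at ih
      rw [absSeq_succ_of_eq_self hγη.le ih, if_pos (by omega)]

theorem sum_Icc_ite_mod_two_eq_zero {M : Type*} [AddCommMonoid M] (c : M) (n : ℕ) :
    ∑ t ∈ Icc 1 n, (if t % 2 = 0 then 0 else c) = ((n + 1) / 2) • c := by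
  induction n with
  | zero => simp
  | succ n ih =>
    rw [sum_Icc_succ_top (by omega), ih]
    rcases Nat.mod_two_eq_zero_or_one (n + 1) with h | h
    · rw [if_pos h, add_zero, show (n + 1 + 1) / 2 = (n + 1) / 2 by omega]
    · rw [if_neg (by omega), ← succ_nsmul, show (n + 1 + 1) / 2 = (n + 1) / 2 + 1 by omega]

theorem half_le_cast_add_one_div_two (n : ℕ) : (n : ℝ) / 2 ≤ ((n + 1) / 2 : ℕ) := by
  rw [div_le_iff₀ two_pos]
  exact_mod_cast (show n ≤ (n + 1) / 2 * 2 by omega)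

theorem csInf_image_abs_sub_eq_zero {s : Set ℝ} {a : ℝ} (ha : a ∈ s) :
    sInf ((fun x => |x - a|) '' s) = 0 := by
  refine IsLeast.csInf_eq ⟨⟨a, ha, by simp⟩, ?_⟩
  rintro _ ⟨x, -, rfl⟩
  exact abs_nonneg _

/-- For `0 < γ < η ≤ 1` and `f(x) = |x − γ|`, the GD iterates on `[−1,1]`
alternate: `x_t = 0` for even `t` and `x_t = η` for odd `t ≤ T`. Consequently the averaged
output satisfies `x^GD = η·⌈T/2⌉/T ≥ η/2` and `f(x^GD) − min_{[−1,1]} f ≥ η/2 − γ`. -/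
theorem gd_oscillation_lower_bound (γ η : ℝ) (hγ : 0 < γ) (hγη : γ < η) (hη : η ≤ 1)
    (T : ℕ) (hT : 1 ≤ T) :
    (∀ t, t % 2 = 0 → absSeq γ η t = 0) ∧
    (∀ t, t % 2 = 1 → t ≤ T → absSeq γ η t = η) ∧
    (T : ℝ)⁻¹ * ∑ t ∈ Finset.Icc 1 T, absSeq γ η t = η * (((T + 1) / 2 : ℕ) : ℝ) / (T : ℝ) ∧
    η / 2 ≤ (T : ℝ)⁻¹ * ∑ t ∈ Finset.Icc 1 T, absSeq γ η t ∧
    η / 2 - γ ≤ |(T : ℝ)⁻¹ * ∑ t ∈ Finset.Icc 1 T, absSeq γ η t - γ| -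
      sInf ((fun x => |x - γ|) '' Set.Icc (-1 : ℝ) 1) := by
  have hseq := absSeq_eq hγ hγη hη
  have havg : (T : ℝ)⁻¹ * ∑ t ∈ Icc 1 T, absSeq γ η t = η * (((T + 1) / 2 : ℕ) : ℝ) / T := by
    simp_rw [hseq, sum_Icc_ite_mod_two_eq_zero, nsmul_eq_mul, inv_mul_eq_div, mul_comm]
  have hge : η / 2 ≤ (T : ℝ)⁻¹ * ∑ t ∈ Icc 1 T, absSeq γ η t := by
    have hTpos : (0 : ℝ) < T := by exact_mod_cast hT
    rw [havg, le_div_iff₀ hTpos, div_mul_eq_mul_div, mul_div_assoc]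
    exact mul_le_mul_of_nonneg_left (half_le_cast_add_one_div_two T) (hγ.trans hγη).le
  refine ⟨fun t ht => by rw [hseq, if_pos ht], fun t ht _ => by rw [hseq, if_neg (by omega)],
    havg, hge, ?_⟩
  rw [csInf_image_abs_sub_eq_zero (show γ ∈ Set.Icc (-1 : ℝ) 1 from ⟨by linarith, by linarith⟩),
    sub_zero]
  exact (sub_le_sub_right hge γ).trans (le_abs_self _)
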